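/- arXiv:1312.4147 — 6 statements merged into one kernel-verified Lean document; each statement's English description precedes it below -/
import Mathlib

section
/- Let t, ℓ, and j be positive integers, and suppose it is NOT the case that one of t or ℓ equals 2 while the other is even. Then Φ_t(j) ≤ (1/2)(ℓ−1)(t−1), i.e., 2·Φ_t(j) ≤ (ℓ−1)(t−1). -/
/-!
Counting the lattice points `(a, b) ∈ [1, ℓ] × [1, t]` with `a b ≤ j` shows that `Φ` is symmetric
in `t` and `ℓ`, so let `t ≤ ℓ`. Bounding `min ⌊j / b⌋ ℓ` by `ℓ` for `b ≤ k` and by `j / b` for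
`b > k` gives `Φ_t(j) ≤ k ℓ + j (H_k - 1)` with `H_k = ∑_{k < b ≤ t} 1 / b`. This is linear in `j`,
so for `k ℓ ≤ j ≤ (k + 1) ℓ` it is at most `ℓ k' H_{k'}` with `k' = k` or `k' = k + 1`. The
trapezoid rule for the convex function `1 / x` gives `2 t (k + 1) H_k ≤ (t - k) (t + k + 1)`, and
the resulting polynomial inequality holds except for `t = 2`, where parity decides, and for
`(t, ℓ) = (3, 3), (3, 4), (3, 5), (4, 4)`, which are checked by computation.
-/

/-- For positive integers `ℓ, t, j`, `Φ_t(j) = (∑_{b=1}^t min(⌊j/b⌋, ℓ)) − j`. -/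
noncomputable def Phi (ℓ t j : ℤ) : ℤ := (∑ b ∈ Finset.Icc (1 : ℤ) t, min (j / b) ℓ) - j

open Finset

lemma min_ediv_eq_sum_ite {j b ℓ : ℤ} (hb : 0 < b) (hj : 0 ≤ j) (hℓ : 0 ≤ ℓ) :
    min (j / b) ℓ = ∑ a ∈ Icc 1 ℓ, if a * b ≤ j then 1 else 0 := by
  have hfilter : {a ∈ Icc 1 ℓ | a * b ≤ j} = Icc 1 (min (j / b) ℓ) := by
    ext a
    simp only [mem_filter, mem_Icc, ← Int.le_ediv_iff_mul_le hb, le_min_iff]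
    omega
  rw [sum_boole, hfilter, Int.card_Icc]
  have := le_min (Int.ediv_nonneg hj hb.le) hℓ
  omega

theorem sum_min_ediv_comm {t ℓ j : ℤ} (ht : 0 ≤ t) (hℓ : 0 ≤ ℓ) (hj : 0 ≤ j) :
    ∑ b ∈ Icc 1 t, min (j / b) ℓ = ∑ a ∈ Icc 1 ℓ, min (j / a) t := by
  calc ∑ b ∈ Icc 1 t, min (j / b) ℓ
      = ∑ b ∈ Icc 1 t, ∑ a ∈ Icc 1 ℓ, if a * b ≤ j then 1 else 0 :=
        sum_congr rfl fun b hb => min_ediv_eq_sum_ite (by grind) hj hℓ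
    _ = ∑ a ∈ Icc 1 ℓ, ∑ b ∈ Icc 1 t, if b * a ≤ j then 1 else 0 := by
        rw [sum_comm]; simp only [mul_comm]
    _ = ∑ a ∈ Icc 1 ℓ, min (j / a) t :=
        sum_congr rfl fun a ha => (min_ediv_eq_sum_ite (by grind) hj ht).symm

theorem Phi_comm {t ℓ j : ℤ} (ht : 0 ≤ t) (hℓ : 0 ≤ ℓ) (hj : 0 ≤ j) :
    Phi ℓ t j = Phi t ℓ j := by
  rw [Phi, Phi, sum_min_ediv_comm ht hℓ hj]

noncomputable def harmonicTail (k t : ℤ) : ℚ := ∑ b ∈ Ioc k t, (b : ℚ)⁻¹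

@[simp]
lemma harmonicTail_self (t : ℤ) : harmonicTail t t = 0 := by
  simp [harmonicTail]

lemma harmonicTail_eq_inv_add {k t : ℤ} (h : k < t) :
    harmonicTail k t = ((k : ℚ) + 1)⁻¹ + harmonicTail (k + 1) t := by
  have : Ioc k t = insert (k + 1) (Ioc (k + 1) t) := by
    ext; simp only [mem_Ioc, mem_insert]; omega
  rw [harmonicTail, this, sum_insert (by simp), harmonicTail]
  push_cast; rfl

lemma inv_add_inv_reflect_le {u v b : ℚ} (hu : 0 < u) (hub : u ≤ b) (hbv : b ≤ v) :
    b⁻¹ + (u + v - b)⁻¹ ≤ u⁻¹ + v⁻¹ := by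
  have hb : 0 < b := hu.trans_le hub
  have hc : 0 < u + v - b := by linarith
  rw [inv_add_inv hb.ne' hc.ne', inv_add_inv hu.ne' (by linarith), div_le_div_iff₀ (by positivity)
    (by nlinarith)]
  nlinarith [mul_nonneg (add_pos hu (hu.trans_le (hub.trans hbv))).le
    (mul_nonneg (sub_nonneg.2 hub) (sub_nonneg.2 hbv))]

theorem two_mul_sum_Icc_inv_le {u v : ℤ} (hu : 0 < u) (huv : u ≤ v + 1) :
    2 * ∑ b ∈ Icc u v, (b : ℚ)⁻¹ ≤ (v - u + 1) * ((u : ℚ)⁻¹ + (v : ℚ)⁻¹) := by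
  have hreflect : ∑ b ∈ Icc u v, (b : ℚ)⁻¹ = ∑ b ∈ Icc u v, ((u : ℚ) + v - b)⁻¹ :=
    sum_nbij' (fun b => u + v - b) (fun b => u + v - b) (by intro b hb; simp at hb ⊢; omega)
      (by intro b hb; simp at hb ⊢; omega) (by simp) (by simp) (by intro b _; push_cast; ring_nf)
  calc 2 * ∑ b ∈ Icc u v, (b : ℚ)⁻¹
      = ∑ b ∈ Icc u v, ((b : ℚ)⁻¹ + ((u : ℚ) + v - b)⁻¹) := by
        rw [sum_add_distrib, ← hreflect, two_mul]
    _ ≤ ∑ b ∈ Icc u v, ((u : ℚ)⁻¹ + (v : ℚ)⁻¹) := by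
        refine sum_le_sum fun b hb => ?_
        rw [mem_Icc] at hb
        exact inv_add_inv_reflect_le (by exact_mod_cast hu) (by exact_mod_cast hb.1)
          (by exact_mod_cast hb.2)
    _ = (v - u + 1) * ((u : ℚ)⁻¹ + (v : ℚ)⁻¹) := by
        rw [sum_const, Int.card_Icc, nsmul_eq_mul]
        congr 1
        have : ((v + 1 - u).toNat : ℤ) = v - u + 1 := by omega
        exact_mod_cast this

theorem harmonicTail_le {k t : ℤ} (hk : 0 ≤ k) (hkt : k ≤ t) (ht : 0 < t) :
    2 * t * (k + 1) * harmonicTail k t ≤ (t - k) * (t + k + 1) := by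
  have hIoc : Ioc k t = Icc (k + 1) t := by ext; simp only [mem_Ioc, mem_Icc]; omega
  have htrap := two_mul_sum_Icc_inv_le (u := k + 1) (v := t) (by omega) (by omega)
  rw [← hIoc, ← harmonicTail] at htrap
  push_cast at htrap
  have hk1 : (0 : ℚ) < k + 1 := by positivity
  have htq : (0 : ℚ) < t := by exact_mod_cast ht
  calc 2 * t * (k + 1) * harmonicTail k t = (t * (k + 1)) * (2 * harmonicTail k t) := by ring
    _ ≤ (t * (k + 1)) * ((t - (k + 1) + 1) * (((k : ℚ) + 1)⁻¹ + (t : ℚ)⁻¹)) := by gcongr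
    _ = (t - k) * (t + k + 1) := by field_simp; ring

lemma cubic_le_sq_mul {t k : ℤ} (ht : 5 ≤ t) (hk : 0 ≤ k) :
    k * (t - k) * (t + k + 1) ≤ (t - 1) ^ 2 * (k + 1) := by
  rcases (by omega : k ≤ 2 ∨ 3 ≤ k) with hk2 | hk3
  · interval_cases k <;> nlinarith
  · -- `4 ×` the difference is `(2t - 3k - 2)² + k (4k² - 5k - 8)`
    nlinarith [sq_nonneg (2 * t - 3 * k - 2),
      mul_nonneg hk (by nlinarith : (0 : ℤ) ≤ 4 * k ^ 2 - 5 * k - 8)]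

lemma mul_cubic_le_of_ne_two {t ℓ k : ℤ} (ht : 0 < t) (ht2 : t ≠ 2) (htℓ : t ≤ ℓ) (hk : 0 ≤ k)
    (hkt : k ≤ t) (h3 : t = 3 → 6 ≤ ℓ) (h4 : t = 4 → 5 ≤ ℓ) :
    ℓ * (k * (t - k) * (t + k + 1)) ≤ (ℓ - 1) * (t - 1) * (t * (k + 1)) := by
  rcases (by omega : t = 1 ∨ t = 3 ∨ t = 4 ∨ 5 ≤ t) with rfl | rfl | rfl | ht5
  · interval_cases k <;> omega
  · have := h3 rfl; interval_cases k <;> omega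
  · have := h4 rfl; interval_cases k <;> omega
  · calc ℓ * (k * (t - k) * (t + k + 1)) ≤ ℓ * ((t - 1) ^ 2 * (k + 1)) := by
          exact mul_le_mul_of_nonneg_left (cubic_le_sq_mul ht5 hk) (by omega)
      _ ≤ (ℓ - 1) * (t - 1) * (t * (k + 1)) := by
          have htℓ' : 0 ≤ (ℓ - t) * (t - 1) := mul_nonneg (by omega) (by omega)
          nlinarith [mul_nonneg htℓ' (by omega : (0 : ℤ) ≤ k + 1)]

theorem two_mul_mul_harmonicTail_le {t ℓ k : ℤ} (ht : 0 < t) (ht2 : t ≠ 2) (htℓ : t ≤ ℓ)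
    (hk : 0 ≤ k) (hkt : k ≤ t) (h3 : t = 3 → 6 ≤ ℓ) (h4 : t = 4 → 5 ≤ ℓ) :
    2 * ℓ * k * harmonicTail k t ≤ (ℓ - 1) * (t - 1) := by
  have htail := harmonicTail_le hk hkt (by omega)
  have hcubic :
      (ℓ : ℚ) * (k * (t - k) * (t + k + 1)) ≤ (ℓ - 1) * (t - 1) * (t * (k + 1)) := by
    exact_mod_cast mul_cubic_le_of_ne_two ht ht2 htℓ hk hkt h3 h4
  have hpos : (0 : ℚ) < t * (k + 1) := by
    have : (0 : ℚ) < t := by exact_mod_cast (by omega : (0 : ℤ) < t)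
    positivity
  refine le_of_mul_le_mul_left ?_ hpos
  calc (t * (k + 1) : ℚ) * (2 * ℓ * k * harmonicTail k t)
      = ℓ * k * (2 * t * (k + 1) * harmonicTail k t) := by ring
    _ ≤ ℓ * k * ((t - k) * (t + k + 1)) :=
        mul_le_mul_of_nonneg_left htail
          (by exact_mod_cast mul_nonneg (by omega : (0 : ℤ) ≤ ℓ) hk)
    _ ≤ t * (k + 1) * ((ℓ - 1) * (t - 1)) := by linarith

theorem Phi_le_harmonicTail {t ℓ j k : ℤ} (hk : 0 ≤ k) (hkt : k ≤ t) :
    (Phi ℓ t j : ℚ) ≤ k * ℓ + j * (harmonicTail k t - 1) := by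
  have hsplit : Icc 1 t = Ioc 0 k ∪ Ioc k t := by
    rw [Ioc_union_Ioc_eq_Ioc hk hkt]; ext; simp only [mem_Ioc, mem_Icc]; omega
  have hlow : ∑ b ∈ Ioc 0 k, ((min (j / b) ℓ : ℤ) : ℚ) ≤ k * ℓ := by
    calc ∑ b ∈ Ioc 0 k, ((min (j / b) ℓ : ℤ) : ℚ) ≤ ∑ b ∈ Ioc 0 k, (ℓ : ℚ) :=
          sum_le_sum fun b _ => by exact_mod_cast min_le_right _ _
      _ = k * ℓ := by
          rw [sum_const, Int.card_Ioc, nsmul_eq_mul, sub_zero]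
          congr 1
          exact_mod_cast Int.toNat_of_nonneg hk
  have hhigh : ∑ b ∈ Ioc k t, ((min (j / b) ℓ : ℤ) : ℚ) ≤ j * harmonicTail k t := by
    rw [harmonicTail, mul_sum]
    refine sum_le_sum fun b hb => ?_
    have hb : (0 : ℚ) < b := by exact_mod_cast (by grind : (0 : ℤ) < b)
    calc ((min (j / b) ℓ : ℤ) : ℚ) ≤ ((j / b : ℤ) : ℚ) := by
          exact_mod_cast min_le_left _ _
      _ ≤ j * (b : ℚ)⁻¹ := by
          rw [← div_eq_mul_inv, le_div_iff₀ hb]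
          exact_mod_cast Int.ediv_mul_le j (by grind)
  rw [Phi, hsplit, sum_union (Ioc_disjoint_Ioc_of_le le_rfl), Int.cast_sub, Int.cast_add,
    Int.cast_sum, Int.cast_sum]
  linarith

theorem exists_Phi_le_mul_harmonicTail {t ℓ j : ℤ} (ht : 0 ≤ t) (hℓ : 0 < ℓ) (hj : 0 ≤ j) :
    ∃ k, 0 ≤ k ∧ k ≤ t ∧ (Phi ℓ t j : ℚ) ≤ ℓ * k * harmonicTail k t := by
  set k := min (j / ℓ) t with hk_def
  have hk : 0 ≤ k := le_min (Int.ediv_nonneg hj hℓ.le) ht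
  have hkt : k ≤ t := min_le_right _ _
  have hkℓ : (k * ℓ : ℚ) ≤ j := by
    exact_mod_cast (Int.le_ediv_iff_mul_le hℓ).1 (min_le_left _ _)
  have hPhi := Phi_le_harmonicTail (ℓ := ℓ) (j := j) hk hkt
  rcases le_or_gt (harmonicTail k t) 1 with hH | hH
  · exact ⟨k, hk, hkt, by nlinarith⟩
  · have hkt' : k < t := lt_of_le_of_ne hkt fun h => by simp [h] at hH; linarith
    have hjℓ : (j : ℚ) ≤ (k + 1) * ℓ := by
      have hk_eq : j / ℓ = k := by omega
      exact_mod_cast hk_eq ▸ (Int.lt_ediv_add_one_mul_self j hℓ).le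
    refine ⟨k + 1, by omega, by omega, ?_⟩
    have hk1 : (k + 1 : ℚ) ≠ 0 := by positivity
    rw [harmonicTail_eq_inv_add hkt'] at hPhi hH
    push_cast
    calc (Phi ℓ t j : ℚ)
        ≤ k * ℓ + (k + 1) * ℓ * ((k + 1 : ℚ)⁻¹ + harmonicTail (k + 1) t - 1) := by nlinarith
      _ = ℓ * (k + 1) * harmonicTail (k + 1) t := by field_simp; ring

lemma Phi_nonpos_of_mul_le {t ℓ j : ℤ} (ht : 0 ≤ t) (h : t * ℓ ≤ j) : Phi ℓ t j ≤ 0 := by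
  have hPhi := Phi_le_harmonicTail (ℓ := ℓ) (j := j) ht le_rfl
  rw [harmonicTail_self, zero_sub, mul_neg_one] at hPhi
  have : ((t * ℓ : ℤ) : ℚ) ≤ j := by exact_mod_cast h
  push_cast at this
  have hPhi' : (Phi ℓ t j : ℚ) ≤ 0 := by linarith
  exact_mod_cast hPhi'

lemma two_mul_Phi_two_le {ℓ j : ℤ} (hℓ : Odd ℓ) : 2 * Phi ℓ 2 j ≤ ℓ - 1 := by
  obtain ⟨m, rfl⟩ := hℓ
  rw [Phi, show Icc (1 : ℤ) 2 = {1, 2} by decide, sum_pair (by decide), Int.ediv_one]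
  omega

lemma two_mul_Phi_le_of_small {t ℓ j : ℤ} (hj : 0 ≤ j)
    (h : t = 3 ∧ 3 ≤ ℓ ∧ ℓ ≤ 5 ∨ t = 4 ∧ ℓ = 4) : 2 * Phi ℓ t j ≤ (ℓ - 1) * (t - 1) := by
  rcases lt_or_ge j (t * ℓ) with hjt | hjt
  · have hcheck : ∀ i ∈ Ico 0 (t * ℓ), 2 * Phi ℓ t i ≤ (ℓ - 1) * (t - 1) := by
      rcases h with ⟨rfl, h3, h5⟩ | ⟨rfl, rfl⟩
      · interval_cases ℓ <;> decide
      · decide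
    exact hcheck j (mem_Ico.2 ⟨hj, hjt⟩)
  · have := Phi_nonpos_of_mul_le (by omega) hjt
    have : 0 ≤ (ℓ - 1) * (t - 1) := mul_nonneg (by omega) (by omega)
    linarith

theorem two_mul_Phi_le_of_le {t ℓ j : ℤ} (ht : 0 < t) (htℓ : t ≤ ℓ) (hj : 0 ≤ j)
    (h2 : ¬(t = 2 ∧ Even ℓ)) : 2 * Phi ℓ t j ≤ (ℓ - 1) * (t - 1) := by
  rcases eq_or_ne t 2 with rfl | ht2
  · have hodd : Odd ℓ := Int.not_even_iff_odd.1 fun he => h2 ⟨rfl, he⟩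
    linarith [two_mul_Phi_two_le (j := j) hodd]
  by_cases hsmall : t = 3 ∧ 3 ≤ ℓ ∧ ℓ ≤ 5 ∨ t = 4 ∧ ℓ = 4
  · exact two_mul_Phi_le_of_small hj hsmall
  obtain ⟨k, hk, hkt, hPhi⟩ := exists_Phi_le_mul_harmonicTail (ℓ := ℓ) ht.le (by omega) hj
  have hbound := two_mul_mul_harmonicTail_le ht ht2 htℓ hk hkt (by omega) (by omega)
  exact_mod_cast (by linarith : (2 * Phi ℓ t j : ℚ) ≤ (ℓ - 1) * (t - 1))

theorem stmt0 (t ℓ j : ℤ) (ht : 0 < t) (hℓ : 0 < ℓ) (hj : 0 < j)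
    (h : ¬((t = 2 ∧ Even ℓ) ∨ (ℓ = 2 ∧ Even t))) :
    2 * Phi ℓ t j ≤ (ℓ - 1) * (t - 1) := by
  rcases le_total t ℓ with htℓ | hℓt
  · exact two_mul_Phi_le_of_le ht htℓ hj.le fun h' => h (Or.inl h')
  · rw [Phi_comm ht.le hℓ.le hj.le, mul_comm (ℓ - 1)]
    exact two_mul_Phi_le_of_le hℓ hℓt hj.le fun h' => h (Or.inr h')
end

section
/- Let t, ℓ, and j be positive integers with 1 ≤ j < ℓ. Then Φ_t(j) ≤ (1/2)(ℓ−1)(t−1), i.e., 2·Φ_t(j) ≤ (ℓ−1)(t−1). -/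
theorem Int.two_mul_ediv_le_self {j b : ℤ} (hj : 0 ≤ j) (hb : 2 ≤ b) : 2 * (j / b) ≤ j :=
  calc 2 * (j / b) ≤ b * (j / b) :=
        mul_le_mul_of_nonneg_right hb (Int.ediv_nonneg hj (by omega))
    _ ≤ j := Int.mul_ediv_self_le (by omega)

theorem Phi_eq_sum_Ioc {ℓ t j : ℤ} (ht : 0 < t) (hjℓ : j ≤ ℓ) :
    Phi ℓ t j = ∑ b ∈ Finset.Ioc 1 t, min (j / b) ℓ := by
  rw [Phi, ← Finset.add_sum_Ioc_eq_sum_Icc (show (1 : ℤ) ≤ t by omega), Int.ediv_one,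
    min_eq_left hjℓ]
  ring

theorem stmt3_general (t ℓ j : ℤ) (ht : 0 < t) (hj : 1 ≤ j)
    (hsmall : j < ℓ) :
    2 * Phi ℓ t j ≤ (ℓ - 1) * (t - 1) := by
  have hterm : ∀ b ∈ Finset.Ioc 1 t, 2 * min (j / b) ℓ ≤ ℓ - 1 := fun b hb => by
    have hb2 : 2 ≤ b := by simp only [Finset.mem_Ioc] at hb; omega
    have := Int.two_mul_ediv_le_self (by omega : 0 ≤ j) hb2
    have := min_le_left (j / b) ℓ
    omega
  calc 2 * Phi ℓ t j = ∑ b ∈ Finset.Ioc 1 t, 2 * min (j / b) ℓ := by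
        rw [Phi_eq_sum_Ioc ht hsmall.le, Finset.mul_sum]
    _ ≤ (Finset.Ioc 1 t).card • (ℓ - 1) := Finset.sum_le_card_nsmul _ _ _ hterm
    _ = (ℓ - 1) * (t - 1) := by
        rw [nsmul_eq_mul, Int.card_Ioc_of_le 1 t (by omega), mul_comm]

theorem stmt3 (t ℓ j : ℤ) (ht : 0 < t) (hℓ : 0 < ℓ) (hj : 1 ≤ j)
    (hsmall : j < ℓ) :
    2 * Phi ℓ t j ≤ (ℓ - 1) * (t - 1) :=
  stmt3_general t ℓ j ht hj hsmall
end

section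
/- Let t ≥ 3 and ℓ ≥ 3 be integers and let j be an integer with ℓ ≤ j < ℓt. Then Φ_t(j) ≤ (1/2)(ℓ−1)(t−1), i.e., 2·Φ_t(j) ≤ (ℓ−1)(t−1). -/
/-!
`∑_{b ≤ t} min(⌊j/b⌋, ℓ)` counts the pairs `(a, b) ∈ [1, ℓ] × [1, t]` with `a * b ≤ j`, so it is
symmetric in `ℓ` and `t`. We induct on the number `t` of columns. Adding column `t + 1` raises `Φ` by
`m = ⌊j/(t+1)⌋`, which is harmless while `2m < ℓ`. Otherwise we count by rows instead: rows `a ≤ m`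
are full, row `a > m` holds `⌊j/a⌋` points, and the chord bound
`1/a ≤ (m + 1 + ℓ - a) / ((m + 1) ℓ)` on `[m + 1, ℓ]` turns the sum of the partial rows into a
polynomial bound.
-/

open Finset

lemma sum_Icc_ite_mul_le {j c n : ℤ} (hc : 0 < c) (hj : 0 ≤ j) (hn : 0 ≤ n) :
    ∑ a ∈ Icc 1 n, (if a * c ≤ j then 1 else 0 : ℤ) = min (j / c) n := by
  have hfilter : {a ∈ Icc 1 n | a * c ≤ j} = Icc 1 (min (j / c) n) := by
    ext a
    simp only [mem_filter, mem_Icc, le_min_iff, Int.le_ediv_iff_mul_le hc]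
    tauto
  rw [sum_boole, hfilter, Int.card_Icc]
  have := Int.ediv_nonneg hj hc.le
  omega

lemma sum_Icc_min_ediv_comm {j ℓ t : ℤ} (hj : 0 ≤ j) (hℓ : 0 ≤ ℓ) (ht : 0 ≤ t) :
    ∑ b ∈ Icc 1 t, min (j / b) ℓ = ∑ a ∈ Icc 1 ℓ, min (j / a) t := by
  calc ∑ b ∈ Icc 1 t, min (j / b) ℓ
      = ∑ b ∈ Icc 1 t, ∑ a ∈ Icc 1 ℓ, (if a * b ≤ j then 1 else 0 : ℤ) :=
        sum_congr rfl fun b hb => (sum_Icc_ite_mul_le (mem_Icc.1 hb).1 hj hℓ).symm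
    _ = ∑ a ∈ Icc 1 ℓ, ∑ b ∈ Icc 1 t, (if b * a ≤ j then 1 else 0 : ℤ) := by
        rw [sum_comm]
        simp only [mul_comm]
    _ = ∑ a ∈ Icc 1 ℓ, min (j / a) t :=
        sum_congr rfl fun a ha => sum_Icc_ite_mul_le (mem_Icc.1 ha).1 hj ht

lemma sum_Icc_eq_sum_Icc_add_sum_Icc {M : Type*} [AddCommMonoid M] (f : ℤ → M) {a b c : ℤ}
    (hab : a ≤ b + 1) (hbc : b ≤ c) :
    ∑ x ∈ Icc a c, f x = ∑ x ∈ Icc a b, f x + ∑ x ∈ Icc (b + 1) c, f x := by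
  rw [← sum_union (disjoint_left.2 fun x hx hx' => by simp only [mem_Icc] at hx hx'; omega)]
  congr 1
  ext x
  simp only [mem_union, mem_Icc]
  omega

lemma two_mul_sum_Icc_id {p q : ℤ} (h : p - 1 ≤ q) :
    2 * ∑ a ∈ Icc p q, a = (q + 1 - p) * (p + q) := by
  induction q, h using Int.leInduction with
  | base => simp
  | succ q hq ih =>
    rw [← insert_Icc_right_eq_Icc_add_one (by omega), sum_insert (by simp), mul_add, ih]
    ring

lemma Phi_add_one {ℓ t : ℤ} (j : ℤ) (ht : 0 ≤ t) :
    Phi ℓ (t + 1) j = Phi ℓ t j + min (j / (t + 1)) ℓ := by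
  rw [Phi, Phi, ← insert_Icc_right_eq_Icc_add_one (by omega), sum_insert (by simp)]
  ring

lemma two_mul_Phi_three_le {ℓ j : ℤ} (hj1 : ℓ ≤ j) (hj2 : j < ℓ * 3) :
    2 * Phi ℓ 3 j ≤ (ℓ - 1) * (3 - 1) := by
  rw [Phi, show Icc (1 : ℤ) 3 = {1, 2, 3} by rfl, sum_insert (by decide), sum_insert (by decide),
    sum_singleton, Int.ediv_one]
  omega

lemma sum_Icc_min_ediv_eq_add_sum {j ℓ t : ℤ} (hj : 0 ≤ j) (ht : 0 < t) (hℓ : j / t ≤ ℓ) :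
    ∑ a ∈ Icc 1 ℓ, min (j / a) t = j / t * t + ∑ a ∈ Icc (j / t + 1) ℓ, j / a := by
  set m := j / t
  have hm : 0 ≤ m := Int.ediv_nonneg hj ht.le
  have hfull : ∀ a ∈ Icc 1 m, min (j / a) t = t := fun a ha => by
    rw [mem_Icc] at ha
    have : t ≤ j / a := (Int.le_ediv_iff_mul_le (by omega)).2 (by
      nlinarith [Int.ediv_mul_le j ht.ne'])
    omega
  have hpartial : ∀ a ∈ Icc (m + 1) ℓ, min (j / a) t = j / a := fun a ha => by
    rw [mem_Icc] at ha
    have : j / a < t := (Int.ediv_lt_iff_lt_mul (by omega)).2 (by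
      nlinarith [Int.lt_ediv_add_one_mul_self j ht])
    omega
  rw [sum_Icc_eq_sum_Icc_add_sum_Icc _ (by omega : (1 : ℤ) ≤ m + 1) hℓ, sum_congr rfl hfull,
    sum_congr rfl hpartial, sum_const, Int.card_Icc, nsmul_eq_mul, Int.toNat_of_nonneg (by omega)]
  ring

lemma two_mul_sum_Icc_ediv_le {j m ℓ : ℤ} (hj : 0 ≤ j) (hm : 0 ≤ m) (hmℓ : m ≤ ℓ) :
    2 * ((m + 1) * ℓ) * ∑ a ∈ Icc (m + 1) ℓ, j / a ≤ (ℓ - m) * (ℓ + m + 1) * j := by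
  have hchord : ∀ a ∈ Icc (m + 1) ℓ, (m + 1) * ℓ * (j / a) ≤ (m + 1 + ℓ - a) * j := by
    intro a ha
    rw [mem_Icc] at ha
    have hconvex : (m + 1) * ℓ ≤ a * (m + 1 + ℓ - a) := by
      nlinarith [mul_nonneg (by omega : (0 : ℤ) ≤ a - (m + 1)) (by omega : (0 : ℤ) ≤ ℓ - a)]
    calc (m + 1) * ℓ * (j / a) ≤ a * (m + 1 + ℓ - a) * (j / a) :=
          mul_le_mul_of_nonneg_right hconvex (Int.ediv_nonneg hj (by omega))
      _ = (m + 1 + ℓ - a) * (j / a * a) := by ring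
      _ ≤ (m + 1 + ℓ - a) * j := mul_le_mul_of_nonneg_left (Int.ediv_mul_le j (by omega)) (by omega)
  have hgauss := two_mul_sum_Icc_id (p := m + 1) (q := ℓ) (by omega)
  calc 2 * ((m + 1) * ℓ) * ∑ a ∈ Icc (m + 1) ℓ, j / a
      = 2 * ∑ a ∈ Icc (m + 1) ℓ, (m + 1) * ℓ * (j / a) := by rw [mul_assoc, mul_sum]
    _ ≤ 2 * ∑ a ∈ Icc (m + 1) ℓ, (m + 1 + ℓ - a) * j :=
        mul_le_mul_of_nonneg_left (sum_le_sum hchord) zero_le_two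
    _ = (ℓ - m) * (ℓ + m + 1) * j := by
        rw [← sum_mul, sum_sub_distrib, sum_const, Int.card_Icc, nsmul_eq_mul,
          Int.toNat_of_nonneg (by omega)]
        linear_combination (-j) * hgauss

/-- The slack `+ 1` costs nothing, as the bound on `2 Φ` is between integers; without it the
inequality fails at `ℓ = t = 4`, `m = 2`, `j = 8`. -/
lemma chord_bound_lt {m ℓ t j : ℤ} (hℓ : 3 ≤ ℓ) (hℓm : ℓ ≤ 2 * m) (ht : 4 ≤ t) (hj : m * t ≤ j) :
    2 * ((m + 1) * ℓ) * (m * t - j) + (ℓ - m) * (ℓ + m + 1) * j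
      < (m + 1) * ℓ * ((ℓ - 1) * (t - 1) + 1) := by
  have hC : 0 < m ^ 2 + m + ℓ + ℓ * (2 * m - ℓ) := by nlinarith
  have hA : 0 < ℓ ^ 2 - (2 * m + 1) * ℓ + m ^ 2 * (m + 1) := by nlinarith
  have hA4 : (m + 1) * ℓ * (ℓ - 2) < 4 * (ℓ ^ 2 - (2 * m + 1) * ℓ + m ^ 2 * (m + 1)) := by
    nlinarith [mul_nonneg (mul_nonneg (by omega : (0 : ℤ) ≤ m - 2) (by omega : (0 : ℤ) ≤ 2 * m - ℓ))
      (by omega : (0 : ℤ) ≤ 2 * m + ℓ)]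
  have hdiff : (m + 1) * ℓ * ((ℓ - 1) * (t - 1) + 1)
        - (2 * ((m + 1) * ℓ) * (m * t - j) + (ℓ - m) * (ℓ + m + 1) * j)
      = (m ^ 2 + m + ℓ + ℓ * (2 * m - ℓ)) * (j - m * t)
        + ((ℓ ^ 2 - (2 * m + 1) * ℓ + m ^ 2 * (m + 1)) * t - (m + 1) * ℓ * (ℓ - 2)) := by
    ring
  nlinarith [mul_nonneg hC.le (by omega : (0 : ℤ) ≤ j - m * t),
    mul_nonneg hA.le (by omega : (0 : ℤ) ≤ t - 4)]

lemma two_mul_Phi_le_of_le_two_mul_ediv {ℓ t j : ℤ} (hℓ : 3 ≤ ℓ) (ht : 4 ≤ t) (hj0 : 0 ≤ j)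
    (hj : j < ℓ * t) (hℓm : ℓ ≤ 2 * (j / t)) :
    2 * Phi ℓ t j ≤ (ℓ - 1) * (t - 1) := by
  set m := j / t
  have hmt : m * t ≤ j := Int.ediv_mul_le j (by omega)
  have hmℓ : m < ℓ := (Int.ediv_lt_iff_lt_mul (by omega)).2 hj
  have hrows : Phi ℓ t j = m * t + ∑ a ∈ Icc (m + 1) ℓ, j / a - j := by
    rw [Phi, sum_Icc_min_ediv_comm hj0 (by omega) (by omega),
      sum_Icc_min_ediv_eq_add_sum hj0 (by omega) hmℓ.le]
  have hpartial := two_mul_sum_Icc_ediv_le hj0 (by omega : 0 ≤ m) hmℓ.le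
  have hpoly := chord_bound_lt hℓ hℓm ht hmt
  have hlt : (m + 1) * ℓ * (2 * Phi ℓ t j) < (m + 1) * ℓ * ((ℓ - 1) * (t - 1) + 1) := by
    rw [hrows]
    linarith
  exact Int.lt_add_one_iff.mp (lt_of_mul_lt_mul_left hlt (by positivity))

theorem stmt8 (t ℓ j : ℤ) (ht : 3 ≤ t) (hℓ : 3 ≤ ℓ)
    (hj1 : ℓ ≤ j) (hj2 : j < ℓ * t) :
    2 * Phi ℓ t j ≤ (ℓ - 1) * (t - 1) := by
  induction t, ht using Int.leInduction generalizing j with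
  | base => exact two_mul_Phi_three_le hj1 hj2
  | succ t ht ih =>
    by_cases hℓm : ℓ ≤ 2 * (j / (t + 1))
    · exact two_mul_Phi_le_of_le_two_mul_ediv hℓ (by omega) (by omega) hj2 hℓm
    · have hjt : j < ℓ * t := by
        nlinarith [Int.lt_ediv_add_one_mul_self j (by omega : (0 : ℤ) < t + 1)]
      rw [Phi_add_one j (by omega)]
      linarith [ih j hj1 hjt, min_le_left (j / (t + 1)) ℓ]
end

section
/- Let ℓ and t be positive integers and let d = (d_1, d_2, …, d_{ℓt}) be the non-decreasing rearrangement of the multiset of products {a·b : 1 ≤ a ≤ ℓ, 1 ≤ b ≤ t} (counted with multiplicity). Then 2·S(d) ≤ ℓ(t−1); moreover, if it is not the case that one of t or ℓ equals 2 while the other is even, then 2·S(d) ≤ (ℓ−1)(t−1). -/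
/-!
For sorted `d`, `S(d) ≤ C` says `d_i ≥ i - C` for all `i`, i.e. for every `n` at most `n + C` of
the products `a * b` are `≤ n`. This count is bounded by discarding a set `E` of `C` pairs and
mapping the other pairs `(a, b)` injectively to positive integers `φ (a, b) ≤ a * b`. Each `φ` is
written in base `m` as `r + m * k` with a digit `r < m`, so that injectivity only has to be checked
on the digit pairs `(r, k)`, where it is linear arithmetic. Odd `t`, and even `ℓ, t ≥ 4`, give
`2 C ≤ (ℓ - 1) (t - 1)`; for `ℓ = 2k, t = 2` one gets `C = k`, enough for `2 C ≤ ℓ (t - 1)`.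
-/

/-- For an integer vector `v = (v_1, …, v_m)` (as a list),
`S(v) = max(0, 1 − v_1, 2 − v_2, …, m − v_m)`. -/
def S (v : List ℤ) : ℤ :=
  (((List.range v.length)).map (fun i => (((i : ℕ) + 1 : ℕ) : ℤ) - v.getD i 0)).foldr max 0

open Finset

lemma List.foldr_max_le {α : Type*} [LinearOrder α] {l : List α} {b c : α} (hb : b ≤ c)
    (h : ∀ x ∈ l, x ≤ c) : l.foldr max b ≤ c := by
  induction l with
  | nil => exact hb
  | cons a l ih =>
    simp only [List.forall_mem_cons] at h
    exact max_le h.1 (ih h.2)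

lemma S_le {v : List ℤ} {C : ℤ} (hC : 0 ≤ C) (h : ∀ i (hi : i < v.length), (i + 1 : ℤ) - v[i] ≤ C) :
    S v ≤ C := by
  refine List.foldr_max_le hC ?_
  simp only [List.mem_map, List.mem_range, forall_exists_index, and_imp]
  rintro _ i hi rfl
  rw [List.getD_eq_getElem v 0 hi]
  exact_mod_cast h i hi

lemma List.Pairwise.succ_le_length_filter_le {α : Type*} [Preorder α] [DecidableLE α]
    {v : List α} (hv : v.Pairwise (· ≤ ·)) {i : ℕ}
    (hi : i < v.length) : i + 1 ≤ (v.filter (· ≤ v[i])).length := by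
  have htake : (v.take (i + 1)).filter (· ≤ v[i]) = v.take (i + 1) := by
    refine List.filter_eq_self.mpr fun x hx => ?_
    obtain ⟨j, hj, rfl⟩ := List.mem_take_iff_getElem.mp hx
    simpa using hv.rel_get_of_le (a := ⟨j, by omega⟩) (b := ⟨i, hi⟩) (by simp; omega)
  have := (((List.take_sublist (i + 1) v).filter (· ≤ v[i])).length_le)
  rwa [htake, List.length_take, min_eq_left (by omega)] at this

lemma S_sort_le {M : Multiset ℤ} {C : ℤ} (hC : 0 ≤ C)
    (h : ∀ x ∈ M, ((M.filter (· ≤ x)).card : ℤ) ≤ x + C) : S (M.sort (· ≤ ·)) ≤ C := by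
  have hsorted := Multiset.pairwise_sort M (· ≤ ·)
  have hvM := Multiset.sort_eq M (· ≤ ·)
  generalize M.sort (· ≤ ·) = v at hsorted hvM ⊢
  subst hvM
  refine S_le hC fun i hi => ?_
  have := h v[i] (Multiset.mem_coe.mpr (List.getElem_mem hi))
  rw [Multiset.filter_coe, Multiset.coe_card] at this
  have := hsorted.succ_le_length_filter_le hi
  omega

def productCount (ℓ t n : ℕ) : ℕ := #{p ∈ Icc 1 ℓ ×ˢ Icc 1 t | p.1 * p.2 ≤ n}

lemma productCount_comm (ℓ t n : ℕ) : productCount ℓ t n = productCount t ℓ n :=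
  card_equiv (Equiv.prodComm ℕ ℕ) fun p => by simp [mul_comm, and_comm]

lemma two_mul_S_products_le {ℓ t D : ℕ} (h : ∀ n, 2 * productCount ℓ t n ≤ 2 * n + D) :
    2 * S (((Icc 1 ℓ ×ˢ Icc 1 t).val.map (fun p => ((p.1 * p.2 : ℕ) : ℤ))).sort (· ≤ ·)) ≤ D := by
  suffices S (((Icc 1 ℓ ×ˢ Icc 1 t).val.map (fun p => ((p.1 * p.2 : ℕ) : ℤ))).sort (· ≤ ·))
      ≤ (D / 2 : ℕ) by omega
  refine S_sort_le (by positivity) fun x hx => ?_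
  obtain ⟨p, -, rfl⟩ := Multiset.mem_map.mp hx
  have hcount : productCount ℓ t (p.1 * p.2) ≤ p.1 * p.2 + D / 2 := by
    have := h (p.1 * p.2)
    omega
  rw [Multiset.filter_map, Multiset.card_map]
  simp only [Function.comp_def, Nat.cast_le]
  exact_mod_cast hcount

lemma card_filter_le_add_card_of_injOn {α : Type*} [DecidableEq α] {s E : Finset α}
    (w φ : α → ℕ) (hφ : ∀ p ∈ s \ E, 0 < φ p ∧ φ p ≤ w p) (hinj : Set.InjOn φ ↑(s \ E))
    (n : ℕ) : #{p ∈ s | w p ≤ n} ≤ n + #E := by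
  have hmain : #{p ∈ s \ E | w p ≤ n} ≤ #(Icc 1 n) := by
    refine card_le_card_of_injOn φ (fun p hp => ?_) (hinj.mono fun p hp => by simp_all)
    simp only [coe_filter, Set.mem_ofPred_eq] at hp
    have := hφ p hp.1
    simp only [coe_Icc, Set.mem_Icc]
    omega
  calc #{p ∈ s | w p ≤ n}
      ≤ #({p ∈ s \ E | w p ≤ n} ∪ E) := card_le_card fun p => by
        simp only [mem_filter, mem_union, mem_sdiff]; tauto
    _ ≤ #{p ∈ s \ E | w p ≤ n} + #E := card_union_le _ _
    _ ≤ n + #E := by simpa using hmain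

lemma Set.InjOn.add_mul {α : Type*} {T : Set α} {m : ℕ} {e : α → ℕ × ℕ}
    (he : ∀ p ∈ T, (e p).1 < m) (hinj : Set.InjOn e T) :
    Set.InjOn (fun p => (e p).1 + m * (e p).2) T := by
  intro p hp p' hp' h
  have hm : 0 < m := (Nat.zero_le _).trans_lt (he p hp)
  have hdiv := congrArg (· / m) h
  have hmod := congrArg (· % m) h
  simp only [Nat.add_mul_div_left _ _ hm, Nat.add_mul_mod_self_left,
    Nat.div_eq_of_lt (he p hp), Nat.div_eq_of_lt (he p' hp'),
    Nat.mod_eq_of_lt (he p hp), Nat.mod_eq_of_lt (he p' hp')] at hdiv hmod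
  exact hinj hp hp' (Prod.ext hmod (by simpa using hdiv))

lemma card_filter_le_add_card_of_digits {α : Type*} [DecidableEq α] {s E : Finset α}
    (w : α → ℕ) (m : ℕ) (e : α → ℕ × ℕ)
    (he : ∀ p ∈ s \ E, (e p).1 < m ∧ 0 < (e p).1 + m * (e p).2 ∧ (e p).1 + m * (e p).2 ≤ w p)
    (hinj : Set.InjOn e ↑(s \ E)) (n : ℕ) : #{p ∈ s | w p ≤ n} ≤ n + #E :=
  card_filter_le_add_card_of_injOn w _ (fun p hp => (he p hp).2)
    (hinj.add_mul fun p hp => (he p hp).1) n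

lemma productCount_le_of_odd (ℓ q n : ℕ) : productCount ℓ (2 * q + 1) n ≤ n + (ℓ - 1) * q := by
  -- The half `b > q` of row `a` fills block `a`; row `1` also fills block `0`.
  refine (card_filter_le_add_card_of_digits (E := Ioc 1 ℓ ×ˢ Icc 1 q) _ (q + 1)
    (fun p => if p.2 ≤ q then (p.2, 0) else (p.2 - (q + 1), p.1)) ?_ ?_ n).trans ?_
  · rintro ⟨a, b⟩ hp
    simp only [mem_sdiff, mem_product, mem_Icc, mem_Ioc] at hp
    split_ifs with hb
    · obtain rfl : a = 1 := by omega
      simp only [mul_zero, add_zero, one_mul]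
      omega
    · obtain ⟨j, rfl⟩ : ∃ j, b = q + 1 + j := ⟨b - (q + 1), by omega⟩
      simp only [Nat.add_sub_cancel_left]
      refine ⟨by omega, by nlinarith, by nlinarith⟩
  · rintro ⟨a, b⟩ hp ⟨a', b'⟩ hp' h
    simp only [mem_coe, mem_sdiff, mem_product, mem_Icc, mem_Ioc] at hp hp'
    dsimp only at h
    split_ifs at h <;> simp only [Prod.mk.injEq] at h ⊢ <;> omega
  · simp [Nat.card_Icc]

lemma productCount_le_of_eq_two (k n : ℕ) : productCount (2 * k) 2 n ≤ n + k := by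
  -- Column `2` gives the even numbers `2a`, the upper half of column `1` the odd ones below `2k`.
  refine (card_filter_le_add_card_of_digits (E := Icc 1 k ×ˢ {1}) _ 2
    (fun p => if p.2 = 2 then (0, p.1) else (1, p.1 - (k + 1))) ?_ ?_ n).trans ?_
  · rintro ⟨a, b⟩ hp
    simp only [mem_sdiff, mem_product, mem_Icc, mem_singleton] at hp
    obtain rfl | rfl : b = 1 ∨ b = 2 := by omega
    all_goals simp only [if_true, if_false, OfNat.one_ne_ofNat]; omega
  · rintro ⟨a, b⟩ hp ⟨a', b'⟩ hp' h
    simp only [mem_coe, mem_sdiff, mem_product, mem_Icc, mem_singleton] at hp hp'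
    dsimp only at h
    split_ifs at h <;> simp only [Prod.mk.injEq] at h ⊢ <;> omega
  · simp

lemma productCount_add_le_of_even (A B n : ℕ) (hA : 2 ≤ A) (hB : 2 ≤ B) :
    productCount (2 * A) (2 * B) n + A + B ≤ n + 2 * A * B := by
  -- The part `b > B` of row `a` fills the digits `< B` of block `a`, row `1` fills block `0`,
  -- and column `B` of the rows `a > A` supplies the missing digit `B` of blocks `1, …, A`.
  have := card_filter_le_add_card_of_digits (s := Icc 1 (2 * A) ×ˢ Icc 1 (2 * B))
    (E := Ioc 1 (2 * A) ×ˢ Ico 1 B ∪ Ioc 1 A ×ˢ {B}) (fun p : ℕ × ℕ => p.1 * p.2) (B + 1)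
    (fun p => if B < p.2 then (p.2 - (B + 1), p.1) else if p.1 = 1 then (p.2, 0)
      else (B, p.1 - A)) ?_ ?_ n
  · have hE : #(Ioc 1 (2 * A) ×ˢ Ico 1 B ∪ Ioc 1 A ×ˢ {B}) ≤ (2 * A - 1) * (B - 1) + (A - 1) :=
      (card_union_le _ _).trans (by simp)
    have hcount : (2 * A - 1) * (B - 1) + (A - 1) + A + B = 2 * A * B := by
      obtain ⟨A, rfl⟩ := Nat.exists_eq_add_of_le' hA
      obtain ⟨B, rfl⟩ := Nat.exists_eq_add_of_le' hB
      simp only [show 2 * (A + 2) - 1 = 2 * A + 3 by omega, show A + 2 - 1 = A + 1 by omega,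
        show B + 2 - 1 = B + 1 by omega]
      ring
    unfold productCount
    omega
  · rintro ⟨a, b⟩ hp
    simp only [mem_sdiff, mem_union, mem_product, mem_Icc, mem_Ioc, mem_Ico, mem_singleton] at hp
    split_ifs with hb ha
    · obtain ⟨j, rfl⟩ : ∃ j, b = B + 1 + j := ⟨b - (B + 1), by omega⟩
      simp only [Nat.add_sub_cancel_left]
      refine ⟨by omega, by nlinarith, by nlinarith⟩
    · subst ha
      omega
    · obtain ⟨j, rfl⟩ : ∃ j, a = A + j := ⟨a - A, by omega⟩
      obtain rfl : b = B := by omega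
      simp only [Nat.add_sub_cancel_left]
      refine ⟨by omega, by nlinarith, by nlinarith⟩
  · rintro ⟨a, b⟩ hp ⟨a', b'⟩ hp' h
    simp only [mem_coe, mem_sdiff, mem_union, mem_product, mem_Icc, mem_Ioc, mem_Ico,
      mem_singleton] at hp hp'
    dsimp only at h
    split_ifs at h <;> simp only [Prod.mk.injEq] at h ⊢ <;> omega

lemma two_mul_productCount_le_of_odd (ℓ : ℕ) {t : ℕ} (ht : Odd t) (n : ℕ) :
    2 * productCount ℓ t n ≤ 2 * n + (ℓ - 1) * (t - 1) := by
  obtain ⟨q, rfl⟩ := ht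
  have := productCount_le_of_odd ℓ q n
  have : (ℓ - 1) * (2 * q + 1 - 1) = 2 * ((ℓ - 1) * q) := by rw [Nat.add_sub_cancel]; ring
  omega

lemma two_mul_productCount_le {ℓ t : ℕ} (hℓ : 0 < ℓ) (ht : 0 < t)
    (h : ¬((t = 2 ∧ Even ℓ) ∨ (ℓ = 2 ∧ Even t))) (n : ℕ) :
    2 * productCount ℓ t n ≤ 2 * n + (ℓ - 1) * (t - 1) := by
  rcases Nat.even_or_odd t with htE | htO
  · rcases Nat.even_or_odd ℓ with hℓE | hℓO
    · obtain ⟨A, rfl⟩ := hℓE.two_dvd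
      obtain ⟨B, rfl⟩ := htE.two_dvd
      have hA : A ≠ 1 := fun hA => h (Or.inr ⟨by omega, even_two_mul B⟩)
      have hB : B ≠ 1 := fun hB => h (Or.inl ⟨by omega, even_two_mul A⟩)
      have := productCount_add_le_of_even A B n (by omega) (by omega)
      zify [show 1 ≤ 2 * A by omega, show 1 ≤ 2 * B by omega] at this ⊢
      nlinarith
    · rw [productCount_comm, mul_comm (ℓ - 1)]
      exact two_mul_productCount_le_of_odd t hℓO n
  · exact two_mul_productCount_le_of_odd ℓ htO n

lemma two_mul_productCount_le_mul_pred {ℓ t : ℕ} (hℓ : 0 < ℓ) (ht : 0 < t) (n : ℕ) :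
    2 * productCount ℓ t n ≤ 2 * n + ℓ * (t - 1) := by
  by_cases h : (t = 2 ∧ Even ℓ) ∨ (ℓ = 2 ∧ Even t)
  · rcases h with ⟨rfl, hℓE⟩ | ⟨rfl, htE⟩
    · obtain ⟨k, rfl⟩ := hℓE.two_dvd
      have := productCount_le_of_eq_two k n
      omega
    · obtain ⟨k, rfl⟩ := htE.two_dvd
      have := productCount_le_of_eq_two k n
      rw [productCount_comm]
      omega
  · have := two_mul_productCount_le hℓ ht h n
    have := Nat.mul_le_mul_right (t - 1) (Nat.sub_le ℓ 1)
    omega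

theorem stmt10 (ℓ t : ℕ) (hℓ : 0 < ℓ) (ht : 0 < t) :
    2 * S (((Finset.Icc 1 ℓ ×ˢ Finset.Icc 1 t).val.map
        (fun p => ((p.1 * p.2 : ℕ) : ℤ))).sort (· ≤ ·)) ≤ (ℓ : ℤ) * ((t : ℤ) - 1) ∧
    (¬((t = 2 ∧ Even ℓ) ∨ (ℓ = 2 ∧ Even t)) →
      2 * S (((Finset.Icc 1 ℓ ×ˢ Finset.Icc 1 t).val.map
          (fun p => ((p.1 * p.2 : ℕ) : ℤ))).sort (· ≤ ·)) ≤ ((ℓ : ℤ) - 1) * ((t : ℤ) - 1)) := by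
  refine ⟨?_, fun h => ?_⟩
  · have := two_mul_S_products_le (two_mul_productCount_le_mul_pred hℓ ht)
    rwa [Nat.cast_mul, Nat.cast_pred ht] at this
  · have := two_mul_S_products_le (two_mul_productCount_le hℓ ht h)
    rwa [Nat.cast_mul, Nat.cast_pred hℓ, Nat.cast_pred ht] at this
end

section
/- Let ℓ, t, and r be positive integers, let c = (c_1, …, c_t) be a non-decreasing vector of positive integers with c_i ≥ i for all 1 ≤ i ≤ t, and let v be the non-decreasing rearrangement of the multiset {a·c_i : 1 ≤ a ≤ ℓ, 1 ≤ i ≤ t} (counted with multiplicity), a vector of length ℓt. If ℓ = 2r−1 then S(v) ≤ (r−1)(t−1), and if ℓ = 2r then S(v) ≤ r(t−1). -/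
open Finset

theorem Nat.sum_Ioc_div_le_sub (s x : ℕ) : ∑ a ∈ Ioc s (2 * s + 1), x / a ≤ x - s := by
  induction x using Nat.strong_induction_on with
  | _ x ih =>
  rcases le_or_gt x (2 * s) with hx | hx
  · calc ∑ a ∈ Ioc s (2 * s + 1), x / a ≤ ∑ a ∈ Ioc s (2 * s + 1), if a ≤ x then 1 else 0 := by
          refine sum_le_sum fun a ha => ?_
          rw [mem_Ioc] at ha
          split_ifs with hax
          · exact Nat.lt_succ_iff.mp ((Nat.div_lt_iff_lt_mul (by omega)).2 (by omega))
          · rw [Nat.div_eq_of_lt (by omega)]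
      _ = #{a ∈ Ioc s (2 * s + 1) | a ≤ x} := (card_filter _ _).symm
      _ ≤ #(Ioc s x) := card_le_card fun a => by simp only [mem_filter, mem_Ioc]; omega
      _ = x - s := Nat.card_Ioc s x
  · -- `x / a = (x - a) / a + 1`, and the quotients of `x - (s + 1)` are bounded by induction
    calc ∑ a ∈ Ioc s (2 * s + 1), x / a ≤ ∑ a ∈ Ioc s (2 * s + 1), ((x - (s + 1)) / a + 1) := by
          refine sum_le_sum fun a ha => ?_
          rw [mem_Ioc] at ha
          rw [Nat.div_eq_sub_div (by omega) (by omega)]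
          gcongr
          omega
      _ = ∑ a ∈ Ioc s (2 * s + 1), (x - (s + 1)) / a + (s + 1) := by
          rw [sum_add_distrib, sum_const, Nat.card_Ioc, smul_eq_mul, mul_one]
          congr 1
          omega
      _ ≤ (x - (s + 1) - s) + (s + 1) := by gcongr; exact ih _ (by omega)
      _ = x - s := by omega

theorem Nat.div_lt_of_div_lt {x t a : ℕ} (ht : 0 < t) (h : x / t < a) : x / a < t :=
  (Nat.div_lt_iff_lt_mul (Nat.zero_lt_of_lt h)).2
    (by rw [mul_comm]; exact (Nat.div_lt_iff_lt_mul ht).1 h)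

theorem Nat.sum_Ioc_min_div_le_card_mul (k t x : ℕ) : ∑ a ∈ Ioc 0 k, min t (x / a) ≤ k * t := by
  simpa using sum_le_card_nsmul (Ioc 0 k) _ t fun a _ => min_le_left t (x / a)

theorem Nat.sum_Ioc_min_div_le_of_div_le {r t x : ℕ} (ht : 0 < t) (hr : x / t ≤ r) :
    ∑ a ∈ Ioc 0 (2 * r + 1), min t (x / a) ≤ x + r * (t - 1) := by
  set s := x / t
  have window : ∑ a ∈ Ioc s (2 * s + 1), min t (x / a) ≤ x - s :=
    (sum_le_sum fun a _ => min_le_right t (x / a)).trans (sum_Ioc_div_le_sub s x)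
  -- beyond `2 s + 1` every quotient is at most `x / (2 (s + 1)) ≤ (t - 1) / 2`
  have far : 2 * ∑ a ∈ Ioc (2 * s + 1) (2 * r + 1), min t (x / a) ≤ 2 * (r - s) * (t - 1) := by
    rw [mul_sum]
    refine (sum_le_card_nsmul _ _ (t - 1) fun a ha => ?_).trans_eq ?_
    · rw [mem_Ioc] at ha
      have h1 : x / a ≤ x / (s + 1) / 2 := by
        rw [Nat.div_div_eq_div_mul]; exact Nat.div_le_div_left (by omega) (by omega)
      have h2 : x / (s + 1) < t := Nat.div_lt_of_div_lt ht (Nat.lt_succ_self s)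
      omega
    · rw [Nat.card_Ioc, smul_eq_mul]; congr 1; omega
  rw [← sum_Ioc_consecutive _ (Nat.zero_le _) (by omega : 2 * s + 1 ≤ 2 * r + 1),
    ← sum_Ioc_consecutive _ (Nat.zero_le s) (by omega : s ≤ 2 * s + 1)]
  have head := sum_Ioc_min_div_le_card_mul s t x
  have hsx : s ≤ x := (Nat.le_mul_of_pos_right s ht).trans (Nat.div_mul_le_self x t)
  obtain ⟨d, rfl⟩ := Nat.exists_eq_add_of_le hr
  obtain ⟨u, rfl⟩ := Nat.exists_eq_add_of_le' ht
  obtain ⟨y, hy⟩ := Nat.exists_eq_add_of_le hsx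
  rw [hy] at window far head ⊢
  simp only [Nat.add_sub_cancel, Nat.add_sub_cancel_left] at window far ⊢
  linarith

theorem Nat.sum_Ioc_min_div_le_of_lt_div {r t x : ℕ} (ht : 0 < t) (hr : r < x / t) :
    ∑ a ∈ Ioc 0 (2 * r + 1), min t (x / a) ≤ x + r * (t - 1) := by
  set k := min (x / t) (2 * r + 1)
  rw [← sum_Ioc_consecutive _ (Nat.zero_le k) (min_le_right _ _)]
  have tail : ∑ a ∈ Ioc k (2 * r + 1), min t (x / a) ≤ (2 * r + 1 - k) * (t - 1) := by
    refine (sum_le_card_nsmul _ _ (t - 1) fun a ha => ?_).trans_eq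
      (by rw [Nat.card_Ioc, smul_eq_mul])
    have : x / a < t := Nat.div_lt_of_div_lt ht (by rw [mem_Ioc] at ha; omega)
    omega
  have hk : k * t ≤ x :=
    (Nat.mul_le_mul_right t (min_le_left _ _)).trans (Nat.div_mul_le_self x t)
  have : (2 * r + 1 - k) * (t - 1) ≤ r * (t - 1) := Nat.mul_le_mul_right _ (by omega)
  linarith [sum_Ioc_min_div_le_card_mul k t x]

theorem Nat.sum_Icc_min_div_le_odd (r t x : ℕ) :
    ∑ a ∈ Icc 1 (2 * r + 1), min t (x / a) ≤ x + r * (t - 1) := by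
  rcases Nat.eq_zero_or_pos t with rfl | ht
  · simp
  rw [show Icc 1 (2 * r + 1) = Ioc 0 (2 * r + 1) from Icc_add_one_left_eq_Ioc 0 _]
  rcases le_or_gt (x / t) r with hr | hr
  · exact sum_Ioc_min_div_le_of_div_le ht hr
  · exact sum_Ioc_min_div_le_of_lt_div ht hr

theorem Nat.sum_Icc_min_div_le_even (r t x : ℕ) :
    ∑ a ∈ Icc 1 (2 * r), min t (x / a) ≤ x + r * (t - 1) :=
  (sum_le_sum_of_subset (Icc_subset_Icc_right (by omega))).trans (sum_Icc_min_div_le_odd r t x)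

theorem card_filter_mul_le_le_sum_min_div (ℓ t n : ℕ) (c : Fin t → ℕ)
    (hc : ∀ i : Fin t, (i : ℕ) + 1 ≤ c i) :
    #{p ∈ Icc 1 ℓ ×ˢ (univ : Finset (Fin t)) | p.1 * c p.2 ≤ n} ≤ ∑ a ∈ Icc 1 ℓ, min t (n / a) := by
  rw [card_filter, sum_product]
  refine sum_le_sum fun a ha => ?_
  rw [← card_filter, ← Fin.card_filter_val_lt]
  refine card_le_card fun i => ?_
  simp only [mem_filter, mem_univ, true_and]
  intro h
  have ha : 0 < a := by rw [mem_Icc] at ha; omega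
  exact (Nat.le_div_iff_mul_le ha).2
    (le_trans (by rw [mul_comm]; exact Nat.mul_le_mul_left a (hc i)) h)

theorem List.Pairwise.succ_le_countP_le_getElem {v : List ℤ} (hv : v.Pairwise (· ≤ ·)) {i : ℕ}
    (hi : i < v.length) : i + 1 ≤ v.countP (· ≤ v[i]) := by
  have hprefix : ∀ z ∈ v.take (i + 1), z ≤ v[i] := by
    intro z hz
    obtain ⟨j, hj, rfl⟩ := List.mem_take_iff_getElem.mp hz
    rcases Nat.lt_or_ge j i with hji | hji
    · exact List.pairwise_iff_getElem.mp hv j i (by omega) hi hji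
    · exact le_of_eq (by congr 1; omega)
  calc i + 1 = (v.take (i + 1)).countP (· ≤ v[i]) := by
        rw [List.countP_eq_length.2 (by simpa using hprefix), List.length_take]; omega
    _ ≤ v.countP (· ≤ v[i]) := (List.take_sublist _ _).countP_le

theorem S_le_of_forall_sub_le (v : List ℤ) {q : ℤ} (hq : 0 ≤ q)
    (h : ∀ (i : ℕ) (hi : i < v.length), (i + 1 : ℤ) - v[i] ≤ q) : S v ≤ q := by
  suffices ∀ l : List ℤ, (∀ z ∈ l, z ≤ q) → l.foldr max 0 ≤ q by
    refine this _ ?_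
    simp only [List.mem_map, List.mem_range]
    rintro _ ⟨i, hi, rfl⟩
    rw [List.getD_eq_getElem _ _ hi]
    exact_mod_cast h i hi
  intro l hl
  induction l with
  | nil => exact hq
  | cons a l ih => exact max_le (hl a (by simp)) (ih fun z hz => hl z (by simp [hz]))

theorem S_sort_le_of_countP_le (M : Multiset ℤ) {q : ℤ} (hq : 0 ≤ q)
    (hM : ∀ y ∈ M, (M.countP (· ≤ y) : ℤ) ≤ y + q) : S (M.sort (· ≤ ·)) ≤ q := by
  refine S_le_of_forall_sub_le _ hq fun i hi => ?_
  have hcount := (Multiset.pairwise_sort M (· ≤ ·)).succ_le_countP_le_getElem hi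
  have hmem : (M.sort (· ≤ ·))[i] ∈ M := (Multiset.mem_sort _).mp (List.getElem_mem hi)
  have hcountP : ∀ y, M.countP (· ≤ y) = (M.sort (· ≤ ·)).countP (· ≤ y) := fun y => by
    rw [← Multiset.coe_countP, Multiset.sort_eq]
  have := hM _ hmem
  rw [hcountP] at this
  omega

theorem S_sort_products_le (ℓ t : ℕ) (c : Fin t → ℕ) (hc : ∀ i : Fin t, (i : ℕ) + 1 ≤ c i) (q : ℕ)
    (hq : ∀ n, ∑ a ∈ Icc 1 ℓ, min t (n / a) ≤ n + q) :
    S (((Icc 1 ℓ ×ˢ (univ : Finset (Fin t))).val.map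
        (fun p => ((p.1 * c p.2 : ℕ) : ℤ))).sort (· ≤ ·)) ≤ q := by
  refine S_sort_le_of_countP_le _ (Nat.cast_nonneg q) fun y hy => ?_
  obtain ⟨p, -, rfl⟩ := Multiset.mem_map.mp hy
  have hcard : Multiset.countP (· ≤ ((p.1 * c p.2 : ℕ) : ℤ))
      ((Icc 1 ℓ ×ˢ (univ : Finset (Fin t))).val.map (fun p => ((p.1 * c p.2 : ℕ) : ℤ)))
      = #{p' ∈ Icc 1 ℓ ×ˢ (univ : Finset (Fin t)) | p'.1 * c p'.2 ≤ p.1 * c p.2} := by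
    simp only [Multiset.countP_map, card_def, filter_val, Nat.cast_le]
  rw [hcard]
  exact_mod_cast (card_filter_mul_le_le_sum_min_div ℓ t _ c hc).trans (hq _)

theorem stmt13_general (ℓ t r : ℕ) (ht : 0 < t) (hr : 0 < r)
    (c : Fin t → ℕ)
    (hci : ∀ i : Fin t, (i : ℕ) + 1 ≤ c i) :
    (ℓ = 2 * r - 1 →
      S (((Finset.Icc 1 ℓ ×ˢ (Finset.univ : Finset (Fin t))).val.map
          (fun p => ((p.1 * c p.2 : ℕ) : ℤ))).sort (· ≤ ·)) ≤ ((r : ℤ) - 1) * ((t : ℤ) - 1)) ∧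
    (ℓ = 2 * r →
      S (((Finset.Icc 1 ℓ ×ˢ (Finset.univ : Finset (Fin t))).val.map
          (fun p => ((p.1 * c p.2 : ℕ) : ℤ))).sort (· ≤ ·)) ≤ (r : ℤ) * ((t : ℤ) - 1)) := by
  constructor
  · rintro rfl
    obtain ⟨k, rfl⟩ := Nat.exists_eq_add_of_le' hr
    rw [show 2 * (k + 1) - 1 = 2 * k + 1 by omega]
    refine (S_sort_products_le _ t c hci _ (Nat.sum_Icc_min_div_le_odd k t)).trans_eq ?_
    push_cast [Nat.cast_sub ht]
    ring
  · rintro rfl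
    refine (S_sort_products_le _ t c hci _ (Nat.sum_Icc_min_div_le_even r t)).trans_eq ?_
    push_cast [Nat.cast_sub ht]
    ring

theorem stmt13 (ℓ t r : ℕ) (hℓ : 0 < ℓ) (ht : 0 < t) (hr : 0 < r)
    (c : Fin t → ℕ) (hcpos : ∀ i, 0 < c i) (hmono : Monotone c)
    (hci : ∀ i : Fin t, (i : ℕ) + 1 ≤ c i) :
    (ℓ = 2 * r - 1 →
      S (((Finset.Icc 1 ℓ ×ˢ (Finset.univ : Finset (Fin t))).val.map
          (fun p => ((p.1 * c p.2 : ℕ) : ℤ))).sort (· ≤ ·)) ≤ ((r : ℤ) - 1) * ((t : ℤ) - 1)) ∧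
    (ℓ = 2 * r →
      S (((Finset.Icc 1 ℓ ×ˢ (Finset.univ : Finset (Fin t))).val.map
          (fun p => ((p.1 * c p.2 : ℕ) : ℤ))).sort (· ≤ ·)) ≤ (r : ℤ) * ((t : ℤ) - 1)) :=
  stmt13_general ℓ t r ht hr c hci
end

section
/- Let d = (d_1, …, d_s) be a non-decreasing vector of positive integers. For each integer t ≥ 0, let p_t := #{ j : 0 ≤ j ≤ s−1 and 0 ≤ t−j < d_{s−j} } (the number of lattice points of the standard configuration C_d on the diagonal x+y = t). Then the least integer t ≥ 0 with p_t < t+1 equals s + min(0, d_1 − 1, d_2 − 2, …, d_s − s). -/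
/-!
On the diagonal `x + y = t` the candidate points of the standard configuration are the rows
`j = 0, …, t`, and row `j` contributes iff `j < s` and `t < j + d (s - j)`. Writing `i = s - j`,
the diagonal is full exactly when `t < s` and `t + i < s + d i` for every `i ≥ s - t`. Hence all
diagonals below `N = s + min(0, d i - i)` are full, while diagonal `N` is not: either `N = s` and
it has at most `s` points, or `N = s - k + d k` for a minimiser `k`, and then row `s - k` is
missing from it.
-/

open Finset

def diagCount (s : ℕ) (d : ℕ → ℕ) (t : ℕ) : ℕ :=
  #{j ∈ range s | j ≤ t ∧ t - j < d (s - j)}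

section diagCount

variable {s : ℕ} {d : ℕ → ℕ} {t : ℕ}

lemma diagCount_le : diagCount s d t ≤ s :=
  (card_filter_le _ _).trans (card_range s).le

lemma diagCount_eq_succ (hts : t < s) (hd : ∀ i ∈ Icc 1 s, t + i < s + d i) :
    diagCount s d t = t + 1 := by
  rw [diagCount, ← card_range (t + 1)]
  congr 1
  ext j
  simp only [mem_filter, mem_range]
  constructor
  · rintro ⟨-, hjt, -⟩
    omega
  · intro hjt
    have := hd (s - j) (mem_Icc.mpr ⟨by omega, by omega⟩)
    exact ⟨by omega, by omega, by omega⟩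

lemma diagCount_le_self_of_eq {k : ℕ} (hk : k ∈ Icc 1 s) (ht : t + k = s + d k) :
    diagCount s d t ≤ t := by
  rw [mem_Icc] at hk
  have hsub : {j ∈ range s | j ≤ t ∧ t - j < d (s - j)} ⊆ (range (t + 1)).erase (s - k) := by
    intro j hj
    simp only [mem_filter, mem_range] at hj
    obtain ⟨hjs, hjt, hjd⟩ := hj
    refine mem_erase.mpr ⟨fun hjk => ?_, mem_range.mpr (by omega)⟩
    rw [hjk, Nat.sub_sub_self hk.2] at hjd
    omega
  calc diagCount s d t ≤ #((range (t + 1)).erase (s - k)) := card_le_card hsub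
    _ = t := by rw [card_erase_of_mem (mem_range.mpr (by omega)), card_range, Nat.add_sub_cancel]

lemma isLeast_diagCount_lt {N : ℕ} (hNs : N ≤ s) (hN : ∀ i ∈ Icc 1 s, N + i ≤ s + d i)
    (hattained : N = s ∨ ∃ k ∈ Icc 1 s, N + k = s + d k) :
    IsLeast {t | diagCount s d t < t + 1} N := by
  refine ⟨?_, fun t ht => ?_⟩
  · rcases hattained with rfl | ⟨k, hk, hNk⟩
    · exact Nat.lt_succ_of_le diagCount_le
    · exact Nat.lt_succ_of_le (diagCount_le_self_of_eq hk hNk)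
  · by_contra! htN
    have hfull : diagCount s d t = t + 1 :=
      diagCount_eq_succ (by omega) fun i hi => by have := hN i hi; omega
    rw [Set.mem_ofPred_eq, hfull] at ht
    exact lt_irrefl _ ht

end diagCount

theorem stmt15_general (s : ℕ) (d : ℕ → ℕ) :
    ((sInf {t : ℕ |
        ((Finset.range s).filter (fun j => j ≤ t ∧ t - j < d (s - j))).card < t + 1} : ℕ) : ℤ) =
      (s : ℤ) + Finset.fold min 0 (fun i => (d i : ℤ) - (i : ℤ)) (Finset.Icc 1 s) := by
  set m := fold min 0 (fun i => (d i : ℤ) - i) (Icc 1 s)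
  obtain ⟨hm0, hmd⟩ : m ≤ 0 ∧ ∀ i ∈ Icc 1 s, m ≤ d i - i := (le_fold_min m).mp le_rfl
  have hattained : 0 ≤ m ∨ ∃ k ∈ Icc 1 s, (d k : ℤ) - k ≤ m := (fold_min_le m).mp le_rfl
  have hms : -(s : ℤ) ≤ m :=
    (le_fold_min _).mpr ⟨by omega, fun i hi => by have := (mem_Icc.mp hi).2; omega⟩
  have hleast : IsLeast {t | diagCount s d t < t + 1} (s + m).toNat := by
    refine isLeast_diagCount_lt (by omega) (fun i hi => by have := hmd i hi; omega) ?_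
    refine hattained.imp (fun h => by omega) fun ⟨k, hk, hdk⟩ => ⟨k, hk, ?_⟩
    have := hmd k hk
    omega
  change ((sInf {t | diagCount s d t < t + 1} : ℕ) : ℤ) = s + m
  rw [hleast.csInf_eq]
  omega

theorem stmt15 (s : ℕ) (hs : 0 < s) (d : ℕ → ℕ)
    (hpos : ∀ i ∈ Finset.Icc 1 s, 0 < d i)
    (hmono : ∀ i j, 1 ≤ i → i ≤ j → j ≤ s → d i ≤ d j) :
    ((sInf {t : ℕ |
        ((Finset.range s).filter (fun j => j ≤ t ∧ t - j < d (s - j))).card < t + 1} : ℕ) : ℤ) =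
      (s : ℤ) + Finset.fold min 0 (fun i => (d i : ℤ) - (i : ℤ)) (Finset.Icc 1 s) :=
  stmt15_general s d
end
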